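/- If two DAGs G and G' are Markov equivalent and G' is obtained from G by reversing a single edge x → y (to y → x), then x and y have the same set of parents other than each other: for every vertex z ∉ {x,y}, z → x is in G iff z → y is in G. -/
import Mathlib


/-- A directed graph (relation) is acyclic: no directed cycles. -/
def IsAcyclic {V : Type*} (E : V → V → Prop) : Prop :=
  ∀ x, ¬ Relation.TransGen E x x

/-- The skeleton (underlying undirected adjacency) of a directed graph. -/
def Skeleton {V : Type*} (E : V → V → Prop) (x y : V) : Prop := E x y ∨ E y x

/-- A v-structure `(x, y, z)`: edges `x → y` and `z → y` with `x` and `z`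
distinct and non-adjacent. -/
def VStruct {V : Type*} (E : V → V → Prop) (x y z : V) : Prop :=
  E x y ∧ E z y ∧ x ≠ z ∧ ¬ Skeleton E x z

/-- Two DAGs are Markov equivalent iff they have the same skeleton and
the same v-structures. -/
def MarkovEquiv {V : Type*} (G G' : V → V → Prop) : Prop :=
  (∀ x y, Skeleton G x y ↔ Skeleton G' x y) ∧
  (∀ x y z, VStruct G x y z ↔ VStruct G' x y z)

/-- If `G'` is obtained from `G` by reversing a single edge `x → y` and the two
DAGs are Markov equivalent, then `x` and `y` have the same parents other than
each other. -/
theorem reversed_edge_same_parents {V : Type*} (G G' : V → V → Prop)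
    (x y : V) (hG : IsAcyclic G) (hG' : IsAcyclic G') (hxy : G x y)
    (hrev : ∀ a b, G' a b ↔ (G a b ∧ ¬ (a = x ∧ b = y)) ∨ (a = y ∧ b = x))
    (hEq : MarkovEquiv G G') :
    ∀ z, z ≠ x → z ≠ y → (G z x ↔ G z y) := by
  intro z hzx hzy
  have hxney : x ≠ y := by
    rintro rfl; exact hG x (Relation.TransGen.single hxy)
  have hyx' : G' y x := (hrev y x).mpr (Or.inr ⟨rfl, rfl⟩)
  have hnxy' : ¬ G' x y := by
    intro h
    rcases (hrev x y).mp h with ⟨_, h2⟩ | ⟨h1, _⟩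
    · exact h2 ⟨rfl, rfl⟩
    · exact hxney h1
  constructor
  · intro hzxG
    by_contra hnzy
    -- z and y must be adjacent, else v-structure (z, x, y) in G' but not in G
    by_cases hyz : G y z
    · exact hG x (Relation.TransGen.tail
        (Relation.TransGen.tail (Relation.TransGen.single hxy) hyz) hzxG)
    · have hzx' : G' z x := (hrev z x).mpr (Or.inl ⟨hzxG, fun h => hxney h.2⟩)
      have hnadj : ¬ Skeleton G' z y := by
        intro h
        rcases (hEq.1 z y).mpr h with h1 | h1
        · exact hnzy h1
        · exact hyz h1
      have hv : VStruct G' z x y := ⟨hzx', hyx', hzy, hnadj⟩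
      have hv2 := (hEq.2 z x y).mpr hv
      exact hG x (Relation.TransGen.tail (Relation.TransGen.single hxy) hv2.2.1)
  · intro hzyG
    by_contra hnzx
    by_cases hxz : G x z
    · have hxz' : G' x z := (hrev x z).mpr (Or.inl ⟨hxz, fun h => hzy h.2⟩)
      have hzy' : G' z y := (hrev z y).mpr (Or.inl ⟨hzyG, fun h => hzx h.1⟩)
      exact hG' x (Relation.TransGen.tail
        (Relation.TransGen.tail (Relation.TransGen.single hxz') hzy') hyx')
    · have hnadj : ¬ Skeleton G z x := fun h => h.elim hnzx hxz
      have hv : VStruct G z y x := ⟨hzyG, hxy, hzx, hnadj⟩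
      have hv2 := (hEq.2 z y x).mp hv
      exact hnxy' hv2.2.1
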